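/- arXiv:1907.11560 — 3 statements merged into one kernel-verified Lean document; each statement's English description precedes it below -/
import Mathlib

section
/- If S and S′ are finite subsets of ℕ with S ∩ S′ = ∅ and both S and S′ are down-admissible for v, then S ∪ S′ is down-admissible for v. Likewise, if S and S′ are disjoint and both up-admissible for v, then S ∪ S′ is up-admissible for v. -/
namespace SL2Tilt

/-- The `i`-th `p`-adic digit of `v`. -/
def dig (p v i : ℕ) : ℕ := v / p ^ i % p

/-- A stretch: a nonempty finite set of consecutive integers. -/
def IsStretch (S : Finset ℕ) : Prop :=
  S.Nonempty ∧ ∀ a ∈ S, ∀ b ∈ S, ∀ c, a ≤ c → c ≤ b → c ∈ S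

/-- `S` is down-admissible for `v` (with respect to the prime `p`):
(d1) the digit of `v` at the minimum of each maximal stretch of `S` is nonzero, and
(d2) if `s ∈ S` and the `(s+1)`-st digit is `0`, then `s + 1 ∈ S`. -/
def DownAdm (p v : ℕ) (S : Finset ℕ) : Prop :=
  (∀ s ∈ S, (s = 0 ∨ s - 1 ∉ S) → dig p v s ≠ 0) ∧
  (∀ s ∈ S, dig p v (s + 1) = 0 → s + 1 ∈ S)

/-- `S` is up-admissible for `v` (with respect to the prime `p`):
(u1) the digit of `v` at the minimum of each maximal stretch of `S` is nonzero, and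
(u2) if `s ∈ S` and the `(s+1)`-st digit is `p - 1`, then `s + 1 ∈ S`. -/
def UpAdm (p v : ℕ) (S : Finset ℕ) : Prop :=
  (∀ s ∈ S, (s = 0 ∨ s - 1 ∉ S) → dig p v s ≠ 0) ∧
  (∀ s ∈ S, dig p v (s + 1) = p - 1 → s + 1 ∈ S)

/-- `v[S] = ∑ᵢ εᵢ aᵢ pⁱ` (εᵢ = -1 for i ∈ S, else 1), as an integer.
All nonzero digits of `v` have index `< v`, so the range `Finset.range v ∪ S` suffices. -/
def vdown (p v : ℕ) (S : Finset ℕ) : ℤ :=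
  ∑ i ∈ Finset.range v ∪ S,
    (if i ∈ S then (-1 : ℤ) else 1) * (dig p v i : ℤ) * (p : ℤ) ^ i

/-- `v(S) = ∑ᵢ aᵢ' pⁱ` where `aᵢ' = -aᵢ` if `i ∈ S`, `aᵢ' = aᵢ + 2` if `i ∉ S` and
`i - 1 ∈ S`, and `aᵢ' = aᵢ` otherwise; as an integer. -/
def vup (p v : ℕ) (S : Finset ℕ) : ℤ :=
  ∑ i ∈ Finset.range v ∪ S ∪ S.image (· + 1),
    (if i ∈ S then -(dig p v i : ℤ)
      else if i - 1 ∈ S then (dig p v i : ℤ) + 2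
      else (dig p v i : ℤ)) * (p : ℤ) ^ i

/-- `v[S]` as a natural number. -/
def vdownN (p v : ℕ) (S : Finset ℕ) : ℕ := (vdown p v S).toNat

/-- `v(S)` as a natural number. -/
def vupN (p v : ℕ) (S : Finset ℕ) : ℕ := (vup p v S).toNat

/-- `fancest' p v s` is `v` with the `p`-adic digits in positions `< s` set to zero.
This is the ancestor `fancest_{s-1}(v)` of the paper: the youngest ancestor of `v`
whose `(s-1)`-st digit is zero (with `fancest' p v 0 = fancest_{-1}(v) = v`). -/
def fancest' (p v s : ℕ) : ℕ := p ^ s * (v / p ^ s)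

/-- The scalar `λ_{v,S} = ∏_{s ∈ S} (-1)^(a_s p^s) · fancest_{s-1}(v)[S]± / fancest_s(v)[S]±`. -/
def lam (p v : ℕ) (S : Finset ℕ) : ℚ :=
  ∏ s ∈ S,
    (-1 : ℚ) ^ (dig p v s * p ^ s) *
      ((vdown p (fancest' p v s) S : ℚ) / (vdown p (fancest' p v (s + 1)) S : ℚ))

/-- The generation of `v` : the number of (matrilineal) ancestors of `v`, i.e. the
number of nonzero `p`-adic digits of `v` minus one. -/
def gen (p v : ℕ) : ℕ :=
  ((Finset.range v).filter (fun i => dig p v i ≠ 0)).card - 1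

/-- A minimal down-admissible stretch for `v`: a down-admissible stretch, no proper
nonempty subset of which is down-admissible for `v`. -/
def MinDownStretch (p v : ℕ) (S : Finset ℕ) : Prop :=
  DownAdm p v S ∧ IsStretch S ∧ ∀ T ⊂ S, T.Nonempty → ¬ DownAdm p v T

/-- A minimal up-admissible stretch for `v`. -/
def MinUpStretch (p v : ℕ) (S : Finset ℕ) : Prop :=
  UpAdm p v S ∧ IsStretch S ∧ ∀ T ⊂ S, T.Nonempty → ¬ UpAdm p v T

/-- `A` and `B` are distant: `d(A,B) > 1`, i.e. `|a - b| > 1` for all `a ∈ A`, `b ∈ B`. -/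
def Distant (A B : Finset ℕ) : Prop :=
  ∀ a ∈ A, ∀ b ∈ B, a + 1 < b ∨ b + 1 < a

section Union

variable {S T : Finset ℕ}

/-- A position with no predecessor in `S ∪ T` has none in `S` or in `T` either. -/
theorem forall_stretchStart_union {q : ℕ → Prop}
    (hS : ∀ s ∈ S, (s = 0 ∨ s - 1 ∉ S) → q s) (hT : ∀ s ∈ T, (s = 0 ∨ s - 1 ∉ T) → q s) :
    ∀ s ∈ S ∪ T, (s = 0 ∨ s - 1 ∉ S ∪ T) → q s := by
  intro s hs hstart
  rcases Finset.mem_union.1 hs with hsS | hsT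
  · exact hS s hsS (hstart.imp_right (mt (Finset.subset_union_left ·)))
  · exact hT s hsT (hstart.imp_right (mt (Finset.subset_union_right ·)))

theorem forall_succ_mem_union {r : ℕ → Prop}
    (hS : ∀ s ∈ S, r s → s + 1 ∈ S) (hT : ∀ s ∈ T, r s → s + 1 ∈ T) :
    ∀ s ∈ S ∪ T, r s → s + 1 ∈ S ∪ T := by
  intro s hs hr
  rcases Finset.mem_union.1 hs with hsS | hsT
  · exact Finset.mem_union_left _ (hS s hsS hr)
  · exact Finset.mem_union_right _ (hT s hsT hr)

theorem DownAdm.union {p v : ℕ} (hS : DownAdm p v S) (hT : DownAdm p v T) :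
    DownAdm p v (S ∪ T) :=
  ⟨forall_stretchStart_union hS.1 hT.1, forall_succ_mem_union hS.2 hT.2⟩

theorem UpAdm.union {p v : ℕ} (hS : UpAdm p v S) (hT : UpAdm p v T) :
    UpAdm p v (S ∪ T) :=
  ⟨forall_stretchStart_union hS.1 hT.1, forall_succ_mem_union hS.2 hT.2⟩

end Union

theorem stmt0_general (p v : ℕ) (S S' : Finset ℕ) :
    (DownAdm p v S → DownAdm p v S' → DownAdm p v (S ∪ S')) ∧
    (UpAdm p v S → UpAdm p v S' → UpAdm p v (S ∪ S')) :=
  ⟨DownAdm.union, UpAdm.union⟩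

/-- If `S` and `S'` are disjoint and both down-admissible for `v`, then `S ∪ S'` is
down-admissible for `v`; likewise for up-admissibility. -/
theorem stmt0 (p v : ℕ) (hp : p.Prime) (hv : 1 ≤ v) (S S' : Finset ℕ)
    (hdisj : Disjoint S S') :
    (DownAdm p v S → DownAdm p v S' → DownAdm p v (S ∪ S')) ∧
    (UpAdm p v S → UpAdm p v S' → UpAdm p v (S ∪ S')) :=
  stmt0_general p v S S'

end SL2Tilt
end

section
/- Let S and S′ be nonempty finite subsets of ℕ that are distant, i.e. d(S,S′) > 1. (i) If S and S′ are both down-admissible for v, then S′ is down-admissible for v[S], S is down-admissible for v[S′], and v[S][S′] = v[S′][S]. (ii) If S and S′ are both up-admissible for v, then S′ is up-admissible for v(S), S is up-admissible for v(S′), and v(S)(S′) = v(S′)(S). (iii) If S is up-admissible for v and S′ is down-admissible for v, then S′ is down-admissible for v(S), S is up-admissible for v[S′], and v(S)[S′] = v[S′](S). -/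
namespace SL2Tilt

-- auxiliary
/-- Indicator: `i` is one more than an element of `S`. -/
def chi (S : Finset ℕ) (i : ℕ) : ℕ := if i ∈ S.image (· + 1) then 1 else 0

lemma mem_image_succ {S : Finset ℕ} {i : ℕ} :
    i ∈ S.image (· + 1) ↔ 0 < i ∧ i - 1 ∈ S := by
  simp only [Finset.mem_image]
  constructor
  · rintro ⟨j, hj, rfl⟩; exact ⟨by omega, by simpa using hj⟩
  · rintro ⟨h0, h1⟩; exact ⟨i - 1, h1, by omega⟩

lemma not_mem_image_succ {S : Finset ℕ} {i : ℕ} (h : i ∉ S.image (· + 1)) :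
    i = 0 ∨ i - 1 ∉ S := by
  rw [mem_image_succ] at h
  push_neg at h
  by_cases h0 : i = 0
  · exact Or.inl h0
  · exact Or.inr (h (by omega))

lemma dig_eq_zero (hp : 2 ≤ p) {v i : ℕ} (h : v ≤ i) : dig p v i = 0 := by
  unfold dig
  rw [Nat.div_eq_of_lt, Nat.zero_mod]
  calc v ≤ i := h
    _ < 2 ^ i := Nat.lt_two_pow_self
    _ ≤ p ^ i := Nat.pow_le_pow_left hp i

lemma dig_succ (p v i : ℕ) : dig p v (i + 1) = dig p (v / p) i := by
  unfold dig
  rw [Nat.div_div_eq_div_mul, pow_succ, mul_comm]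

lemma dig_sum_range (hp : 2 ≤ p) (n : ℕ) (b : ℕ → ℕ) (hb : ∀ i, b i < p)
    (hs : ∀ i, n ≤ i → b i = 0) (i : ℕ) :
    dig p (∑ j ∈ Finset.range n, b j * p ^ j) i = b i := by
  induction i generalizing b n with
  | zero =>
    rcases n with _ | m
    · simp [dig, hs 0 (by omega)]
    · rw [Finset.sum_range_succ']
      simp only [pow_zero, mul_one]
      have : ∑ j ∈ Finset.range m, b (j + 1) * p ^ (j + 1)
          = p * ∑ j ∈ Finset.range m, b (j + 1) * p ^ j := by
        rw [Finset.mul_sum]; congr 1; ext j; ring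
      rw [this, dig]
      simp only [pow_zero, Nat.div_one]
      rw [Nat.mul_add_mod, Nat.mod_eq_of_lt (hb 0)]
  | succ i ih =>
    rw [dig_succ]
    rcases n with _ | m
    · simp only [Finset.range_zero, Finset.sum_empty, Nat.zero_div]
      rw [show (0 : ℕ) = ∑ j ∈ Finset.range 0, b (j+1) * p ^ j by simp]
      exact ih 0 (fun j => b (j+1)) (fun j => hb _) (fun j _ => hs _ (by omega))
    · rw [Finset.sum_range_succ']
      simp only [pow_zero, mul_one]
      have h1 : ∑ j ∈ Finset.range m, b (j + 1) * p ^ (j + 1)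
          = p * ∑ j ∈ Finset.range m, b (j + 1) * p ^ j := by
        rw [Finset.mul_sum]; congr 1; ext j; ring
      rw [h1, Nat.mul_add_div (by omega : 0 < p),
        Nat.div_eq_of_lt (hb 0), Nat.add_zero]
      exact ih m (fun j => b (j+1)) (fun j => hb _) (fun j hj => hs _ (by omega))


lemma dig_pos_mem_range (hp : 2 ≤ p) {v i : ℕ} (h : dig p v i ≠ 0) :
    i ∈ Finset.range v := by
  rw [Finset.mem_range]
  by_contra hc
  exact h (dig_eq_zero hp (by omega))

lemma chi_le_one (S : Finset ℕ) (i : ℕ) : chi S i ≤ 1 := by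
  unfold chi; split <;> omega

/-- Digits of `v[S]`. -/
def dbD (p v : ℕ) (S : Finset ℕ) (i : ℕ) : ℕ :=
  (if i ∈ S then p - dig p v i else dig p v i) - chi S i

/-- Digits of `v(S)`. -/
def dbU (p v : ℕ) (S : Finset ℕ) (i : ℕ) : ℕ :=
  if i ∈ S then p - dig p v i - chi S i else dig p v i + chi S i

lemma dig_lt (hp : 2 ≤ p) (v i : ℕ) : dig p v i < p := Nat.mod_lt _ (by omega)
lemma dig_sum (hp : 2 ≤ p) (T : Finset ℕ) (b : ℕ → ℕ) (hb : ∀ i, b i < p)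
    (hs : ∀ i ∉ T, b i = 0) (i : ℕ) :
    dig p (∑ j ∈ T, b j * p ^ j) i = b i := by
  set n := T.sup id + 1 with hn
  have hsub : T ⊆ Finset.range n := by
    intro j hj
    simp only [Finset.mem_range, hn]
    exact Nat.lt_succ_of_le (Finset.le_sup (f := id) hj)
  rw [Finset.sum_subset hsub (fun x _ hx => by rw [hs x hx, zero_mul])]
  exact dig_sum_range hp n b hb (fun j hj => by
    by_contra h
    exact absurd (hsub (by by_contra hT; exact h (hs j hT))) (by simp [Finset.mem_range]; omega)) i


lemma dbD_lt (hp : 2 ≤ p) (h : DownAdm p v S) (i : ℕ) : dbD p v S i < p := by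
  have hd := dig_lt hp v i
  have hc := chi_le_one S i
  unfold dbD
  by_cases hiS : i ∈ S
  · by_cases hic : i ∈ S.image (· + 1)
    · simp only [hiS, if_pos, chi, hic]; omega
    · have := h.1 i hiS (not_mem_image_succ hic)
      simp only [hiS, if_pos, chi, hic, if_neg, not_false_iff]; omega
  · simp only [hiS, if_neg, not_false_iff]; omega

lemma dbU_lt (hp : 2 ≤ p) (h : UpAdm p v S) (i : ℕ) : dbU p v S i < p := by
  have hd := dig_lt hp v i
  unfold dbU
  by_cases hiS : i ∈ S
  · by_cases hic : i ∈ S.image (· + 1)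
    · simp only [hiS, if_pos, chi, hic]; omega
    · have := h.1 i hiS (not_mem_image_succ hic)
      simp only [hiS, if_pos, chi, hic, if_neg, not_false_iff]; omega
  · by_cases hic : i ∈ S.image (· + 1)
    · rw [mem_image_succ] at hic
      have h2 : dig p v i ≠ p - 1 := by
        intro he
        apply hiS
        have := h.2 (i - 1) hic.2 (by rw [show i - 1 + 1 = i by omega]; exact he)
        rwa [show i - 1 + 1 = i by omega] at this
      simp only [hiS, if_neg, not_false_iff, chi, mem_image_succ.2 hic, if_pos]; omega
    · simp only [hiS, if_neg, not_false_iff, chi, hic]; omega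

lemma dbD_supp (hp : 2 ≤ p) {v i : ℕ} {S : Finset ℕ}
    (h : i ∉ Finset.range v ∪ S) : dbD p v S i = 0 := by
  simp only [Finset.mem_union, Finset.mem_range, not_or, not_lt] at h
  unfold dbD
  rw [if_neg h.2, dig_eq_zero hp h.1, Nat.zero_sub]

lemma dbU_supp (hp : 2 ≤ p) {v i : ℕ} {S : Finset ℕ}
    (h : i ∉ Finset.range v ∪ S ∪ S.image (· + 1)) : dbU p v S i = 0 := by
  simp only [Finset.mem_union, Finset.mem_range, not_or, not_lt] at h
  unfold dbU chi
  rw [if_neg h.1.2, dig_eq_zero hp h.1.1, if_neg h.2]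

/-- Under down-admissibility, `S.image (·+1) ⊆ range v ∪ S`. -/
lemma image_subset (hp : 2 ≤ p) (h : DownAdm p v S) :
    S.image (· + 1) ⊆ Finset.range v ∪ S := by
  intro i hi
  rw [mem_image_succ] at hi
  by_cases hiS : i ∈ S
  · exact Finset.mem_union_right _ hiS
  · by_cases hd : dig p v i = 0
    · have := h.2 (i - 1) hi.2 (by rwa [show i - 1 + 1 = i by omega])
      rw [show i - 1 + 1 = i by omega] at this
      exact absurd this hiS
    · exact Finset.mem_union_left _ (dig_pos_mem_range hp hd)


/-- Telescoping identity. -/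
lemma chi_sum_eq {S R : Finset ℕ} (hsub : S.image (· + 1) ⊆ R) (p : ℕ) :
    ∑ i ∈ R, (chi S i : ℤ) * (p : ℤ) ^ i = ∑ s ∈ S, (p : ℤ) ^ (s + 1) := by
  have h0 : ∀ i, (chi S i : ℤ) * (p : ℤ) ^ i
      = if i ∈ S.image (· + 1) then (p : ℤ) ^ i else 0 := by
    intro i; unfold chi; split <;> simp
  rw [Finset.sum_congr rfl fun i _ => h0 i, ← Finset.sum_filter,
    Finset.filter_mem_eq_inter, Finset.inter_eq_right.2 hsub,
    Finset.sum_image (fun a _ b _ h => by omega)]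

lemma ite_mem_sum_eq {S R : Finset ℕ} (hsub : S ⊆ R) (f : ℕ → ℤ) :
    ∑ i ∈ R, (if i ∈ S then f i else 0) = ∑ s ∈ S, f s := by
  rw [← Finset.sum_filter, Finset.filter_mem_eq_inter, Finset.inter_eq_right.2 hsub]

lemma vdown_eq (hp : 2 ≤ p) (h : DownAdm p v S) :
    vdown p v S = ∑ i ∈ Finset.range v ∪ S, (dbD p v S i : ℤ) * (p : ℤ) ^ i := by
  have hcast : ∀ i, (dbD p v S i : ℤ)
      = (if i ∈ S then (p : ℤ) - dig p v i else (dig p v i : ℤ)) - chi S i := by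
    intro i
    have hd := dig_lt hp v i
    have hc := chi_le_one S i
    unfold dbD
    by_cases hiS : i ∈ S
    · simp only [hiS, if_pos]
      omega
    · simp only [hiS, if_neg, not_false_iff]
      by_cases hic : i ∈ S.image (· + 1)
      · rw [mem_image_succ] at hic
        have hd0 : dig p v i ≠ 0 := by
          intro he
          have := h.2 (i - 1) hic.2 (by rwa [show i - 1 + 1 = i by omega])
          rw [show i - 1 + 1 = i by omega] at this
          exact hiS this
        unfold chi
        rw [if_pos (mem_image_succ.2 hic)]
        omega
      · unfold chi; rw [if_neg hic]; omega
  have hsplit : (∑ i ∈ Finset.range v ∪ S, (dbD p v S i : ℤ) * (p : ℤ) ^ i)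
        - vdown p v S
      = (∑ i ∈ Finset.range v ∪ S, (if i ∈ S then (p : ℤ) ^ (i + 1) else 0))
        - ∑ i ∈ Finset.range v ∪ S, (chi S i : ℤ) * (p : ℤ) ^ i := by
    unfold vdown
    rw [← Finset.sum_sub_distrib, ← Finset.sum_sub_distrib]
    refine Finset.sum_congr rfl fun i _ => ?_
    rw [hcast i]
    by_cases hiS : i ∈ S <;> simp only [hiS, if_pos, if_neg, not_false_iff] <;> ring
  rw [chi_sum_eq (image_subset hp h) p,
    ite_mem_sum_eq Finset.subset_union_right (fun i => (p : ℤ) ^ (i + 1))] at hsplit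
  omega

lemma vup_eq (hp : 2 ≤ p) (h : UpAdm p v S) :
    vup p v S = ∑ i ∈ Finset.range v ∪ S ∪ S.image (· + 1),
      (dbU p v S i : ℤ) * (p : ℤ) ^ i := by
  have hcast : ∀ i, (dbU p v S i : ℤ)
      = (if i ∈ S then -(dig p v i : ℤ)
          else if i - 1 ∈ S then (dig p v i : ℤ) + 2 else (dig p v i : ℤ))
        + (if i ∈ S then ((p : ℤ) - chi S i) else -(chi S i : ℤ)) := by
    intro i
    have hd := dig_lt hp v i
    have hc := chi_le_one S i
    unfold dbU
    by_cases hiS : i ∈ S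
    · simp only [hiS, if_pos]; omega
    · simp only [hiS, if_neg, not_false_iff]
      by_cases hic : i ∈ S.image (· + 1)
      · rw [mem_image_succ] at hic
        have : i - 1 ∈ S := hic.2
        rw [if_pos this]
        unfold chi
        rw [if_pos (mem_image_succ.2 hic)]
        omega
      · have hns : i - 1 ∉ S := by
          rw [mem_image_succ] at hic
          push_neg at hic
          intro hmem
          rcases Nat.eq_zero_or_pos i with h0 | h0
          · subst h0; simp at hmem; exact hiS hmem
          · exact absurd hmem (hic h0)
        rw [if_neg hns]
        unfold chi
        rw [if_neg hic]
        omega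
  have hsplit : (∑ i ∈ Finset.range v ∪ S ∪ S.image (· + 1),
          (dbU p v S i : ℤ) * (p : ℤ) ^ i) - vup p v S
      = (∑ i ∈ Finset.range v ∪ S ∪ S.image (· + 1),
          (if i ∈ S then (p : ℤ) ^ (i + 1) else 0))
        - ∑ i ∈ Finset.range v ∪ S ∪ S.image (· + 1),
            (chi S i : ℤ) * (p : ℤ) ^ i := by
    unfold vup
    rw [← Finset.sum_sub_distrib, ← Finset.sum_sub_distrib]
    refine Finset.sum_congr rfl fun i _ => ?_
    rw [hcast i]
    by_cases hiS : i ∈ S <;> simp only [hiS, if_pos, if_neg, not_false_iff] <;> ring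
  rw [chi_sum_eq Finset.subset_union_right p,
    ite_mem_sum_eq (fun s hs => Finset.mem_union_left _ (Finset.mem_union_right _ hs))
      (fun i => (p : ℤ) ^ (i + 1))] at hsplit
  omega

lemma vdownN_eq (hp : 2 ≤ p) (h : DownAdm p v S) :
    vdownN p v S = ∑ i ∈ Finset.range v ∪ S, dbD p v S i * p ^ i := by
  unfold vdownN
  rw [vdown_eq hp h]
  rw [show (∑ i ∈ Finset.range v ∪ S, (dbD p v S i : ℤ) * (p : ℤ) ^ i)
      = ((∑ i ∈ Finset.range v ∪ S, dbD p v S i * p ^ i : ℕ) : ℤ) by push_cast; rfl]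
  exact Int.toNat_natCast _

lemma vupN_eq (hp : 2 ≤ p) (h : UpAdm p v S) :
    vupN p v S = ∑ i ∈ Finset.range v ∪ S ∪ S.image (· + 1),
      dbU p v S i * p ^ i := by
  unfold vupN
  rw [vup_eq hp h]
  rw [show (∑ i ∈ Finset.range v ∪ S ∪ S.image (· + 1),
        (dbU p v S i : ℤ) * (p : ℤ) ^ i)
      = ((∑ i ∈ Finset.range v ∪ S ∪ S.image (· + 1),
        dbU p v S i * p ^ i : ℕ) : ℤ) by push_cast; rfl]
  exact Int.toNat_natCast _

lemma dig_vdownN (hp : 2 ≤ p) (h : DownAdm p v S) (i : ℕ) :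
    dig p (vdownN p v S) i = dbD p v S i := by
  rw [vdownN_eq hp h]
  exact dig_sum hp _ _ (dbD_lt hp h) (fun j hj => dbD_supp hp hj) i

lemma dig_vupN (hp : 2 ≤ p) (h : UpAdm p v S) (i : ℕ) :
    dig p (vupN p v S) i = dbU p v S i := by
  rw [vupN_eq hp h]
  exact dig_sum hp _ _ (dbU_lt hp h) (fun j hj => dbU_supp hp hj) i

lemma distant_symm {S S' : Finset ℕ} (hd : Distant S S') : Distant S' S := by
  intro a ha b hb
  rcases hd b hb a ha with h | h
  · exact Or.inr h
  · exact Or.inl h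

lemma distant_not_mem {S S' : Finset ℕ} (hd : Distant S S') {i : ℕ} (hi : i ∈ S) :
    i ∉ S' := fun h => by rcases hd i hi i h with h' | h' <;> omega

lemma distant_not_mem_succ {S S' : Finset ℕ} (hd : Distant S S') {i : ℕ} (hi : i ∈ S) :
    i + 1 ∉ S' := fun h => by rcases hd i hi (i + 1) h with h' | h' <;> omega

lemma distant_chi {S S' : Finset ℕ} (hd : Distant S S') {i : ℕ} (hi : i ∈ S) :
    chi S' i = 0 := by
  unfold chi
  rw [if_neg]
  intro hm
  rw [mem_image_succ] at hm
  rcases hd i hi (i - 1) hm.2 with h | h <;> omega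

lemma chi_succ_eq_zero {S : Finset ℕ} {i : ℕ} (h : i ∉ S) : chi S (i + 1) = 0 := by
  unfold chi
  rw [if_neg]
  intro hm
  rw [mem_image_succ] at hm
  simp only [Nat.add_sub_cancel] at hm
  exact h hm.2

lemma chi_or {S S' : Finset ℕ} (hd : Distant S S') (i : ℕ) :
    chi S i = 0 ∨ chi S' i = 0 := by
  by_cases h : chi S i = 0
  · exact Or.inl h
  · right
    have h1 : i ∈ S.image (· + 1) := by
      unfold chi at h; by_contra hc; rw [if_neg hc] at h; exact h rfl
    rw [mem_image_succ] at h1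
    unfold chi
    rw [if_neg]
    intro hm
    rw [mem_image_succ] at hm
    exact distant_not_mem hd h1.2 hm.2

lemma dbD_away {p v i : ℕ} {S : Finset ℕ} (hsS : i ∉ S) (hchi : chi S i = 0) :
    dbD p v S i = dig p v i := by
  unfold dbD; rw [if_neg hsS, hchi, Nat.sub_zero]

lemma dbU_away {p v i : ℕ} {S : Finset ℕ} (hsS : i ∉ S) (hchi : chi S i = 0) :
    dbU p v S i = dig p v i := by
  unfold dbU; rw [if_neg hsS, hchi, Nat.add_zero]

lemma DownAdm_transfer {p v w : ℕ} {S' : Finset ℕ}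
    (hdig : ∀ s ∈ S', dig p w s = dig p v s ∧ dig p w (s + 1) = dig p v (s + 1))
    (h' : DownAdm p v S') : DownAdm p w S' := by
  constructor
  · intro s hs hmin; rw [(hdig s hs).1]; exact h'.1 s hs hmin
  · intro s hs h0; exact h'.2 s hs (by rw [← (hdig s hs).2]; exact h0)

lemma UpAdm_transfer {p v w : ℕ} {S' : Finset ℕ}
    (hdig : ∀ s ∈ S', dig p w s = dig p v s ∧ dig p w (s + 1) = dig p v (s + 1))
    (h' : UpAdm p v S') : UpAdm p w S' := by
  constructor
  · intro s hs hmin; rw [(hdig s hs).1]; exact h'.1 s hs hmin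
  · intro s hs h0; exact h'.2 s hs (by rw [← (hdig s hs).2]; exact h0)

lemma digs_pres_down (hp : 2 ≤ p) (h : DownAdm p v S) {S' : Finset ℕ}
    (hd : Distant S S') :
    ∀ s ∈ S', dig p (vdownN p v S) s = dig p v s ∧
      dig p (vdownN p v S) (s + 1) = dig p v (s + 1) := by
  intro s hs
  have h1 : s ∉ S := distant_not_mem (distant_symm hd) hs
  have h2 : s + 1 ∉ S := fun hc => distant_not_mem_succ (distant_symm hd) hs hc
  constructor
  · rw [dig_vdownN hp h, dbD_away h1 (distant_chi (distant_symm hd) hs)]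
  · rw [dig_vdownN hp h, dbD_away h2 (chi_succ_eq_zero h1)]

lemma digs_pres_up (hp : 2 ≤ p) (h : UpAdm p v S) {S' : Finset ℕ}
    (hd : Distant S S') :
    ∀ s ∈ S', dig p (vupN p v S) s = dig p v s ∧
      dig p (vupN p v S) (s + 1) = dig p v (s + 1) := by
  intro s hs
  have h1 : s ∉ S := distant_not_mem (distant_symm hd) hs
  have h2 : s + 1 ∉ S := fun hc => distant_not_mem_succ (distant_symm hd) hs hc
  constructor
  · rw [dig_vupN hp h, dbU_away h1 (distant_chi (distant_symm hd) hs)]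
  · rw [dig_vupN hp h, dbU_away h2 (chi_succ_eq_zero h1)]

lemma key_dd (hp : 2 ≤ p) (hS : DownAdm p v S) {S' : Finset ℕ}
    (hS' : DownAdm p v S') (hd : Distant S S') (i : ℕ) :
    dbD p (vdownN p v S) S' i = dbD p (vdownN p v S') S i := by
  have ha := dig_lt hp v i
  unfold dbD
  rw [dig_vdownN hp hS, dig_vdownN hp hS']
  unfold dbD
  by_cases h1 : i ∈ S
  · have h2 : i ∉ S' := distant_not_mem hd h1
    have h3 : chi S' i = 0 := distant_chi hd h1
    simp only [h1, h2, if_pos, if_neg, not_false_iff, h3, Nat.sub_zero]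
  · by_cases h2 : i ∈ S'
    · have h3 : chi S i = 0 := distant_chi (distant_symm hd) h2
      simp only [h1, h2, if_pos, if_neg, not_false_iff, h3, Nat.sub_zero]
    · simp only [h1, h2, if_neg, not_false_iff]
      omega

lemma key_uu (hp : 2 ≤ p) (hS : UpAdm p v S) {S' : Finset ℕ}
    (hS' : UpAdm p v S') (hd : Distant S S') (i : ℕ) :
    dbU p (vupN p v S) S' i = dbU p (vupN p v S') S i := by
  have ha := dig_lt hp v i
  unfold dbU
  rw [dig_vupN hp hS, dig_vupN hp hS']
  unfold dbU
  by_cases h1 : i ∈ S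
  · have h2 : i ∉ S' := distant_not_mem hd h1
    have h3 : chi S' i = 0 := distant_chi hd h1
    simp only [h1, h2, if_pos, if_neg, not_false_iff, h3, Nat.sub_zero,
      Nat.add_zero]
  · by_cases h2 : i ∈ S'
    · have h3 : chi S i = 0 := distant_chi (distant_symm hd) h2
      simp only [h1, h2, if_pos, if_neg, not_false_iff, h3, Nat.sub_zero,
        Nat.add_zero]
    · simp only [h1, h2, if_neg, not_false_iff]
      omega

lemma key_ud (hp : 2 ≤ p) (hS : UpAdm p v S) {S' : Finset ℕ}
    (hS' : DownAdm p v S') (hd : Distant S S') (i : ℕ) :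
    dbD p (vupN p v S) S' i = dbU p (vdownN p v S') S i := by
  have ha := dig_lt hp v i
  unfold dbD
  rw [dig_vupN hp hS]
  unfold dbU
  rw [dig_vdownN hp hS']
  unfold dbD
  by_cases h1 : i ∈ S
  · have h2 : i ∉ S' := distant_not_mem hd h1
    have h3 : chi S' i = 0 := distant_chi hd h1
    simp only [h1, h2, if_pos, if_neg, not_false_iff, h3, Nat.sub_zero,
      Nat.add_zero]
  · by_cases h2 : i ∈ S'
    · have h3 : chi S i = 0 := distant_chi (distant_symm hd) h2
      simp only [h1, h2, if_pos, if_neg, not_false_iff, h3, Nat.sub_zero,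
        Nat.add_zero]
    · have h3 := chi_or hd i
      have h4 := chi_le_one S i
      have h5 := chi_le_one S' i
      simp only [h1, h2, if_neg, not_false_iff]
      omega

lemma sum_extendD (hp : 2 ≤ p) {w : ℕ} {T U : Finset ℕ} (h : DownAdm p w T)
    (hU : Finset.range w ∪ T ⊆ U) :
    vdownN p w T = ∑ i ∈ U, dbD p w T i * p ^ i := by
  rw [vdownN_eq hp h]
  exact Finset.sum_subset hU (fun x _ hx => by rw [dbD_supp hp hx, zero_mul])

lemma sum_extendU (hp : 2 ≤ p) {w : ℕ} {T U : Finset ℕ} (h : UpAdm p w T)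
    (hU : Finset.range w ∪ T ∪ T.image (· + 1) ⊆ U) :
    vupN p w T = ∑ i ∈ U, dbU p w T i * p ^ i := by
  rw [vupN_eq hp h]
  exact Finset.sum_subset hU (fun x _ hx => by rw [dbU_supp hp hx, zero_mul])

theorem main_dd (hp : 2 ≤ p) {S S' : Finset ℕ} (hd : Distant S S')
    (h : DownAdm p v S) (h' : DownAdm p v S') :
    DownAdm p (vdownN p v S) S' ∧ DownAdm p (vdownN p v S') S ∧
      vdownN p (vdownN p v S) S' = vdownN p (vdownN p v S') S := by
  have hA : DownAdm p (vdownN p v S) S' :=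
    DownAdm_transfer (digs_pres_down hp h hd) h'
  have hB : DownAdm p (vdownN p v S') S :=
    DownAdm_transfer (digs_pres_down hp h' (distant_symm hd)) h
  refine ⟨hA, hB, ?_⟩
  set U := (Finset.range (vdownN p v S) ∪ S') ∪ (Finset.range (vdownN p v S') ∪ S)
  rw [sum_extendD hp hA (Finset.subset_union_left (s₂ := _)),
    sum_extendD hp hB (Finset.subset_union_right (s₁ := _))]
  exact Finset.sum_congr rfl fun i _ => by rw [key_dd hp h h' hd i]

theorem main_uu (hp : 2 ≤ p) {S S' : Finset ℕ} (hd : Distant S S')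
    (h : UpAdm p v S) (h' : UpAdm p v S') :
    UpAdm p (vupN p v S) S' ∧ UpAdm p (vupN p v S') S ∧
      vupN p (vupN p v S) S' = vupN p (vupN p v S') S := by
  have hA : UpAdm p (vupN p v S) S' :=
    UpAdm_transfer (digs_pres_up hp h hd) h'
  have hB : UpAdm p (vupN p v S') S :=
    UpAdm_transfer (digs_pres_up hp h' (distant_symm hd)) h
  refine ⟨hA, hB, ?_⟩
  set U := (Finset.range (vupN p v S) ∪ S' ∪ S'.image (· + 1))
    ∪ (Finset.range (vupN p v S') ∪ S ∪ S.image (· + 1))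
  rw [sum_extendU hp hA (Finset.subset_union_left (s₂ := _)),
    sum_extendU hp hB (Finset.subset_union_right (s₁ := _))]
  exact Finset.sum_congr rfl fun i _ => by rw [key_uu hp h h' hd i]

theorem main_ud (hp : 2 ≤ p) {S S' : Finset ℕ} (hd : Distant S S')
    (h : UpAdm p v S) (h' : DownAdm p v S') :
    DownAdm p (vupN p v S) S' ∧ UpAdm p (vdownN p v S') S ∧
      vdownN p (vupN p v S) S' = vupN p (vdownN p v S') S := by
  have hA : DownAdm p (vupN p v S) S' :=
    DownAdm_transfer (digs_pres_up hp h hd) h'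
  have hB : UpAdm p (vdownN p v S') S :=
    UpAdm_transfer (digs_pres_down hp h' (distant_symm hd)) h
  refine ⟨hA, hB, ?_⟩
  set U := (Finset.range (vupN p v S) ∪ S')
    ∪ (Finset.range (vdownN p v S') ∪ S ∪ S.image (· + 1))
  rw [sum_extendD hp hA (Finset.subset_union_left (s₂ := _)),
    sum_extendU hp hB (Finset.subset_union_right (s₁ := _))]
  exact Finset.sum_congr rfl fun i _ => by rw [key_ud hp h h' hd i]

/-- Reflections along distant sets commute (down/down, up/up and up/down versions). -/
theorem stmt1 (p v : ℕ) (hp : p.Prime) (hv : 1 ≤ v) (S S' : Finset ℕ)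
    (hS : S.Nonempty) (hS' : S'.Nonempty) (hd : Distant S S') :
    (DownAdm p v S → DownAdm p v S' →
      DownAdm p (vdownN p v S) S' ∧ DownAdm p (vdownN p v S') S ∧
      vdownN p (vdownN p v S) S' = vdownN p (vdownN p v S') S) ∧
    (UpAdm p v S → UpAdm p v S' →
      UpAdm p (vupN p v S) S' ∧ UpAdm p (vupN p v S') S ∧
      vupN p (vupN p v S) S' = vupN p (vupN p v S') S) ∧
    (UpAdm p v S → DownAdm p v S' →
      DownAdm p (vupN p v S) S' ∧ UpAdm p (vdownN p v S') S ∧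
      vdownN p (vupN p v S) S' = vupN p (vdownN p v S') S) :=
  ⟨fun h h' => main_dd hp.two_le hd h h',
   fun h h' => main_uu hp.two_le hd h h',
   fun h h' => main_ud hp.two_le hd h h'⟩
end SL2Tilt
end

section
/- Let S and S′ be stretches with S′ > S and d(S,S′) = 1. If S′ is up-admissible for v and S is down-admissible for v(S′), then S′ ∪ S is up-admissible for v and v(S′)[S] = v(S′ ∪ S). -/
namespace SL2Tilt

section Aux

open Finset

lemma sum_dig_range (p v N : ℕ) :
    ∑ i ∈ Finset.range N, dig p v i * p ^ i = v % p ^ N := by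
  induction N with
  | zero => simp [Nat.mod_one]
  | succ N ih =>
    rw [Finset.sum_range_succ, ih, pow_succ, Nat.mod_mul, dig]
    ring

lemma lt_pow_of_le {p v i : ℕ} (hp : 2 ≤ p) (h : v ≤ i) : v < p ^ i :=
  lt_of_le_of_lt h ((Nat.lt_two_pow_self (n := i)).trans_le (Nat.pow_le_pow_left hp i))

lemma dig_eq_zero_of_le {p v i : ℕ} (hp : 2 ≤ p) (h : v ≤ i) : dig p v i = 0 := by
  rw [dig, Nat.div_eq_of_lt (lt_pow_of_le hp h), Nat.zero_mod]

lemma sum_dig_over {p v : ℕ} (hp : 2 ≤ p) (T : Finset ℕ) (hT : Finset.range v ⊆ T) :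
    ∑ i ∈ T, (dig p v i : ℤ) * (p : ℤ) ^ i = v := by
  rw [← Finset.sum_subset hT (fun i _ hi => by
    rw [dig_eq_zero_of_le hp (by simpa using hi)]; simp)]
  have := sum_dig_range p v v
  rw [Nat.mod_eq_of_lt (lt_pow_of_le hp le_rfl)] at this
  exact_mod_cast congrArg (Nat.cast : ℕ → ℤ) this

lemma sum_dig_Icc {p : ℕ} (v a b : ℕ) (hab : a ≤ b + 1) :
    ∑ i ∈ Finset.Icc a b, (dig p v i : ℤ) * (p : ℤ) ^ i
      = ((v % p ^ (b + 1) : ℕ) : ℤ) - ((v % p ^ a : ℕ) : ℤ) := by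
  rw [← Finset.Ico_add_one_right_eq_Icc, Finset.sum_Ico_eq_sub _ hab]
  have h1 := sum_dig_range p v (b + 1)
  have h2 := sum_dig_range p v a
  push_cast [← h1, ← h2]
  ring

lemma vdown_Icc {p : ℕ} (hp : 2 ≤ p) (v a b : ℕ) (hab : a ≤ b) :
    vdown p v (Finset.Icc a b)
      = (v : ℤ) - 2 * (((v % p ^ (b + 1) : ℕ) : ℤ) - ((v % p ^ a : ℕ) : ℤ)) := by
  have key : ∀ i ∈ Finset.range v ∪ Finset.Icc a b,
      (if i ∈ Finset.Icc a b then (-1 : ℤ) else 1) * (dig p v i : ℤ) * (p : ℤ) ^ i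
        = (dig p v i : ℤ) * (p : ℤ) ^ i
          - 2 * (if i ∈ Finset.Icc a b then (dig p v i : ℤ) * (p : ℤ) ^ i else 0) := by
    intro i _
    split_ifs <;> ring
  rw [vdown, Finset.sum_congr rfl key, Finset.sum_sub_distrib, ← Finset.mul_sum,
    Finset.sum_ite_mem, Finset.inter_eq_right.mpr Finset.subset_union_right,
    sum_dig_over hp _ Finset.subset_union_left, sum_dig_Icc v a b (by omega)]

lemma vup_Icc {p : ℕ} (hp : 2 ≤ p) (v a b : ℕ) (hab : a ≤ b) :
    vup p v (Finset.Icc a b)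
      = (v : ℤ) + 2 * (p : ℤ) ^ (b + 1)
        - 2 * (((v % p ^ (b + 1) : ℕ) : ℤ) - ((v % p ^ a : ℕ) : ℤ)) := by
  set T := Finset.range v ∪ Finset.Icc a b ∪ (Finset.Icc a b).image (· + 1) with hT
  have hsub : Finset.Icc a b ⊆ T := by
    intro i hi; exact Finset.mem_union_left _ (Finset.mem_union_right _ hi)
  have hmem : b + 1 ∈ T := by
    apply Finset.mem_union_right
    exact Finset.mem_image.mpr ⟨b, Finset.mem_Icc.mpr ⟨hab, le_rfl⟩, rfl⟩
  have key : ∀ i ∈ T,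
      (if i ∈ Finset.Icc a b then -(dig p v i : ℤ)
        else if i - 1 ∈ Finset.Icc a b then (dig p v i : ℤ) + 2
        else (dig p v i : ℤ)) * (p : ℤ) ^ i
      = (dig p v i : ℤ) * (p : ℤ) ^ i
        - 2 * (if i ∈ Finset.Icc a b then (dig p v i : ℤ) * (p : ℤ) ^ i else 0)
        + 2 * (if i = b + 1 then (p : ℤ) ^ i else 0) := by
    intro i _
    simp only [Finset.mem_Icc]
    split_ifs with h1 h2 h3 h4 h5
    · exfalso; omega
    · ring
    · ring
    · exfalso; omega
    · exfalso; omega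
    · ring
  rw [vup, ← hT, Finset.sum_congr rfl key]
  rw [Finset.sum_add_distrib, Finset.sum_sub_distrib, ← Finset.mul_sum, ← Finset.mul_sum,
    Finset.sum_ite_mem, Finset.inter_eq_right.mpr hsub,
    Finset.sum_ite_eq' T (b + 1) (fun i => (p : ℤ) ^ i), if_pos hmem,
    sum_dig_over hp _ (hT ▸ (Finset.subset_union_left.trans Finset.subset_union_left)),
    sum_dig_Icc v a b (by omega)]
  ring

lemma dig_eq_mod_div {p : ℕ} (hp : 2 ≤ p) (v i : ℕ) :
    dig p v i = v % p ^ (i + 1) / p ^ i := by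
  have h0 : 0 < p ^ i := pow_pos (by omega) i
  rw [pow_succ, Nat.mod_mul, Nat.add_mul_div_left _ _ h0,
    Nat.div_eq_of_lt (Nat.mod_lt _ h0), zero_add, dig]

lemma stretch_eq_Icc {S : Finset ℕ} (h : IsStretch S) :
    S = Finset.Icc (S.min' h.1) (S.max' h.1) := by
  ext c
  simp only [Finset.mem_Icc]
  constructor
  · exact fun hc => ⟨Finset.min'_le _ _ hc, Finset.le_max' _ _ hc⟩
  · rintro ⟨h1, h2⟩
    exact h.2 _ (Finset.min'_mem _ _) _ (Finset.max'_mem _ _) c h1 h2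

lemma mod_cast_zmod {p k : ℕ} (v N : ℕ) (h : p ^ k ∣ N) :
    ((v % N : ℕ) : ZMod (p ^ k)) = (v : ZMod (p ^ k)) := by
  have hN : ((N : ℕ) : ZMod (p ^ k)) = 0 := (ZMod.natCast_eq_zero_iff _ _).mpr h
  have := congrArg (Nat.cast : ℕ → ZMod (p ^ k)) (Nat.mod_add_div v N)
  push_cast at this
  rw [hN] at this
  simpa using this

end Aux

/-- For adjacent stretches `S' > S`: if `S'` is up-admissible for `v` and `S` is
down-admissible for `v(S')`, then `S' ∪ S` is up-admissible for `v` and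
`v(S')[S] = v(S' ∪ S)`. -/
theorem stmt8 (p v : ℕ) (hp : p.Prime) (hv : 1 ≤ v) (S S' : Finset ℕ)
    (hS : IsStretch S) (hS' : IsStretch S')
    (hlt : ∀ a ∈ S, ∀ b ∈ S', a < b)
    (hadj : ∃ a ∈ S, a + 1 ∈ S')
    (h1 : UpAdm p v S') (h2 : DownAdm p (vupN p v S') S) :
    UpAdm p v (S ∪ S') ∧ vdownN p (vupN p v S') S = vupN p v (S ∪ S') := by
  have hp2 : 2 ≤ p := hp.two_le
  have hSne := hS.1
  have hS'ne := hS'.1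
  set m := S.min' hSne with hm
  set M := S.max' hSne with hM
  set M' := S'.max' hS'ne with hM'
  have hsEq : S = Finset.Icc m M := stretch_eq_Icc hS
  have hmM : m ≤ M := Finset.min'_le _ _ (Finset.max'_mem _ _)
  obtain ⟨a0, ha0S, ha0S'⟩ := hadj
  have haM : a0 = M := by
    have h1 : a0 ≤ M := Finset.le_max' _ _ ha0S
    have h2 : M < a0 + 1 := hlt M (Finset.max'_mem _ _) _ ha0S'
    omega
  have hM1 : M + 1 ∈ S' := haM ▸ ha0S'
  have hMM' : M + 1 ≤ M' := Finset.le_max' _ _ hM1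
  have hs'Eq : S' = Finset.Icc (M + 1) M' := by
    have hle : S'.min' hS'ne ≤ M + 1 := Finset.min'_le _ _ hM1
    have hgt : M < S'.min' hS'ne := hlt M (Finset.max'_mem _ _) _ (Finset.min'_mem _ _)
    have : S'.min' hS'ne = M + 1 := by omega
    rw [stretch_eq_Icc hS', this]
  have hunion : S ∪ S' = Finset.Icc m M' := by
    rw [hsEq, hs'Eq]
    ext i
    simp only [Finset.mem_union, Finset.mem_Icc]
    omega
  have hA : v % p ^ (M' + 1) < p ^ (M' + 1) := Nat.mod_lt _ (pow_pos (by omega) _)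
  have hvupS' : vup p v S' = (v : ℤ) + 2 * (p : ℤ) ^ (M' + 1)
      - 2 * (((v % p ^ (M' + 1) : ℕ) : ℤ) - ((v % p ^ (M + 1) : ℕ) : ℤ)) := by
    rw [hs'Eq]; exact vup_Icc hp2 v (M + 1) M' hMM'
  have hnn : 0 ≤ vup p v S' := by
    rw [hvupS']
    have hAz : ((v % p ^ (M' + 1) : ℕ) : ℤ) ≤ (p : ℤ) ^ (M' + 1) := by
      exact_mod_cast hA.le
    have hB : (0 : ℤ) ≤ ((v % p ^ (M + 1) : ℕ) : ℤ) := Int.natCast_nonneg _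
    have hv' : (0 : ℤ) ≤ (v : ℤ) := Int.natCast_nonneg _
    linarith
  set u : ℕ := vupN p v S' with hu
  have huZ : (u : ℤ) = vup p v S' := Int.toNat_of_nonneg hnn
  have key : ∀ k, k ≤ M + 1 → u % p ^ k = v % p ^ k := by
    intro k hk
    have hz : (u : ZMod (p ^ k)) = (v : ZMod (p ^ k)) := by
      have hcast := congrArg (fun x : ℤ => (x : ZMod (p ^ k))) (huZ.trans hvupS')
      simp only [Int.cast_add, Int.cast_sub, Int.cast_mul, Int.cast_natCast,
        Int.cast_pow, Int.cast_ofNat, Int.cast_two] at hcast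
      have hz0 : ((p : ZMod (p ^ k))) ^ (M' + 1) = 0 := by
        have h0 : ((p ^ (M' + 1) : ℕ) : ZMod (p ^ k)) = 0 :=
          (ZMod.natCast_eq_zero_iff _ _).mpr (pow_dvd_pow p (by omega))
        push_cast at h0
        exact h0
      rw [mod_cast_zmod v _ (pow_dvd_pow p (by omega : k ≤ M' + 1)),
        mod_cast_zmod v _ (pow_dvd_pow p hk), hz0] at hcast
      rw [hcast]
      ring
    exact (ZMod.natCast_eq_natCast_iff u v (p ^ k)).mp hz
  have hdig : ∀ i, i ≤ M → dig p u i = dig p v i := by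
    intro i hi
    rw [dig_eq_mod_div hp2, dig_eq_mod_div hp2, key (i + 1) (by omega)]
  constructor
  · constructor
    · intro s hs hcond
      have hs' : m ≤ s ∧ s ≤ M' := Finset.mem_Icc.mp (hunion ▸ hs)
      have hsm : s = m := by
        rcases hcond with h0 | hc1
        · omega
        · by_contra hne
          apply hc1
          rw [hunion, Finset.mem_Icc]
          omega
      rw [hsm]
      have hmem : m ∈ S := by rw [hsEq, Finset.mem_Icc]; omega
      have hcond' : m = 0 ∨ m - 1 ∉ S := by
        rcases Nat.eq_zero_or_pos m with h0 | h0
        · exact Or.inl h0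
        · refine Or.inr ?_
          rw [hsEq, Finset.mem_Icc]
          omega
      have h := h2.1 m hmem hcond'
      rwa [hdig m hmM] at h
    · intro s hs hd
      have hs' : m ≤ s ∧ s ≤ M' := Finset.mem_Icc.mp (hunion ▸ hs)
      by_cases hsM : s < M'
      · rw [hunion, Finset.mem_Icc]; omega
      · apply Finset.mem_union_right
        apply h1.2 s _ hd
        rw [hs'Eq, Finset.mem_Icc]
        omega
  · have hvd : vdown p u S = vup p v (S ∪ S') := by
      rw [hunion, hsEq, vdown_Icc hp2 u m M hmM, vup_Icc hp2 v m M' (by omega),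
        key (M + 1) le_rfl, key m (by omega), huZ, hvupS']
      ring
    simp only [vdownN, vupN]
    rw [hvd]


end SL2Tilt
end
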